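/- arXiv:1811.05028 — 3 statements merged into one kernel-verified Lean document; each statement's English description precedes it below -/
import Mathlib

section
/- Let f be a real polynomial whose degree q is even with q ≥ 2 (so its leading coefficient c_q is nonzero). Then f does not satisfy any one-sided Lipschitz condition: for every real number μ there exist a, b ∈ ℝ with a ≠ b such that (a − b)·(f(a) − f(b)) > μ·(a − b)². -/
open Polynomial Filter

/-- A real polynomial of even degree `q ≥ 2` does not satisfy any
one-sided Lipschitz condition. -/
theorem no_oneSided_lipschitz_of_even_degree (f : Polynomial ℝ) (q : ℕ)
    (hdeg : f.natDegree = q) (heven : Even q) (hq : 2 ≤ q) :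
    ∀ μ : ℝ, ∃ a b : ℝ, a ≠ b ∧ μ * (a - b) ^ 2 < (a - b) * (f.eval a - f.eval b) := by
  intro μ
  set g : Polynomial ℝ := f - Polynomial.C μ * Polynomial.X with hg
  have hf0 : f ≠ 0 := by
    intro h
    simp [h] at hdeg
    omega
  have hlt : (Polynomial.C μ * Polynomial.X).natDegree < f.natDegree := by
    calc (Polynomial.C μ * Polynomial.X).natDegree ≤ 1 := by
          apply le_trans (Polynomial.natDegree_mul_le)
          simp
      _ < f.natDegree := by omega
  have hgdeg : g.natDegree = q := by
    rw [hg, Polynomial.natDegree_sub_eq_left_of_natDegree_lt hlt, hdeg]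
  have hgne : g ≠ 0 := fun h => by simp [h] at hgdeg; omega
  have hglead : g.leadingCoeff ≠ 0 := Polynomial.leadingCoeff_ne_zero.mpr hgne
  have hgdegpos : 0 < g.degree := by
    rw [Polynomial.natDegree_pos_iff_degree_pos.symm, hgdeg]; omega
  have heval : ∀ x : ℝ, g.eval x = f.eval x - μ * x := by
    intro x; simp [hg]
  -- key: find a ≠ b with (a - b) * (g.eval a - g.eval b) > 0
  have key : ∃ a b : ℝ, a ≠ b ∧ 0 < (a - b) * (g.eval a - g.eval b) := by
    rcases lt_or_gt_of_ne hglead with hneg | hpos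
    · -- leading coefficient negative: look at -∞ via composition with -X
      set h : Polynomial ℝ := g.comp (-Polynomial.X) with hh
      have hXdeg : (-Polynomial.X : Polynomial ℝ).natDegree = 1 := by simp
      have hhlead : h.leadingCoeff = g.leadingCoeff := by
        rw [hh, Polynomial.leadingCoeff_comp (by rw [hXdeg]; omega)]
        have : (-Polynomial.X : Polynomial ℝ).leadingCoeff = -1 := by simp
        rw [this, hgdeg, heven.neg_one_pow, mul_one]
      have hhdeg : 0 < h.degree := by
        rw [← Polynomial.natDegree_pos_iff_degree_pos, hh,
          Polynomial.natDegree_comp, hXdeg, hgdeg]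
        omega
      have htend : Tendsto (fun x => h.eval x) atTop atBot :=
        Polynomial.tendsto_atBot_of_leadingCoeff_nonpos h hhdeg
          (by rw [hhlead]; exact le_of_lt hneg)
      have : ∀ᶠ x : ℝ in atTop, h.eval x < h.eval 0 :=
        htend.eventually (eventually_lt_atBot (h.eval 0))
      obtain ⟨x, hx1, hx2⟩ := (this.and (eventually_gt_atTop 0)).exists
      have he : ∀ y : ℝ, h.eval y = g.eval (-y) := by
        intro y; simp [hh, Polynomial.eval_comp]
      refine ⟨0, -x, by simpa using ne_of_gt hx2, ?_⟩
      rw [he x, he 0, neg_zero] at hx1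
      nlinarith
    · -- leading coefficient positive: look at +∞
      have htend : Tendsto (fun x => g.eval x) atTop atTop :=
        Polynomial.tendsto_atTop_of_leadingCoeff_nonneg g hgdegpos (le_of_lt hpos)
      have : ∀ᶠ x : ℝ in atTop, g.eval 0 < g.eval x :=
        htend.eventually (eventually_gt_atTop (g.eval 0))
      obtain ⟨x, hx1, hx2⟩ := (this.and (eventually_gt_atTop 0)).exists
      refine ⟨x, 0, ne_of_gt hx2, ?_⟩
      nlinarith
  obtain ⟨a, b, hab, hpos⟩ := key
  refine ⟨a, b, hab, ?_⟩
  rw [heval a, heval b] at hpos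
  nlinarith [hpos]
end

section
/- Let f be a real polynomial whose degree q is odd with q ≥ 3 and whose leading coefficient c_q is strictly positive. Then f does not satisfy any one-sided Lipschitz condition: for every real number μ there exist a, b ∈ ℝ with a ≠ b such that (a − b)·(f(a) − f(b)) > μ·(a − b)². -/
open Polynomial

/-- A real polynomial of odd degree `q ≥ 3` with strictly positive
leading coefficient does not satisfy any one-sided Lipschitz condition. -/
theorem no_oneSided_lipschitz_of_odd_degree_pos_lead (f : Polynomial ℝ) (q : ℕ)
    (hdeg : f.natDegree = q) (hodd : Odd q) (hq : 3 ≤ q)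
    (hlead : 0 < f.leadingCoeff) :
    ∀ μ : ℝ, ∃ a b : ℝ, a ≠ b ∧ μ * (a - b) ^ 2 < (a - b) * (f.eval a - f.eval b) := by
  intro μ
  have hf0 : f ≠ 0 := by
    intro h
    simp [h] at hlead
  set p : Polynomial ℝ := X * f with hp
  set r : Polynomial ℝ := C μ * X ^ 2 + C (f.eval 0) * X + C 0 with hr
  have hpdeg : p.degree = ((1 + q : ℕ) : WithBot ℕ) := by
    rw [hp, Polynomial.degree_mul, Polynomial.degree_X,
      Polynomial.degree_eq_natDegree hf0, hdeg]
    push_cast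
    rfl
  have hrdeg : r.degree ≤ 2 := Polynomial.degree_quadratic_le
  have hlt : r.degree < p.degree := by
    rw [hpdeg]
    refine lt_of_le_of_lt hrdeg ?_
    exact_mod_cast Nat.lt_of_lt_of_le (by norm_num) (Nat.add_le_add_left hq 1)
  set g : Polynomial ℝ := p - r with hg
  have hglead : g.leadingCoeff = f.leadingCoeff := by
    rw [hg, Polynomial.leadingCoeff_sub_of_degree_lt hlt, hp,
      Polynomial.leadingCoeff_mul, Polynomial.leadingCoeff_X, one_mul]
  have hgdeg : (0 : WithBot ℕ) < g.degree := by
    rw [hg, Polynomial.degree_sub_eq_left_of_degree_lt hlt, hpdeg]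
    exact_mod_cast Nat.add_pos_left Nat.one_pos q
  have htend : Filter.Tendsto (fun x => g.eval x) Filter.atTop Filter.atTop := by
    apply Polynomial.tendsto_atTop_of_leadingCoeff_nonneg _ hgdeg
    rw [hglead]; exact hlead.le
  have h1 : ∀ᶠ x in Filter.atTop, 0 < g.eval x := htend.eventually_gt_atTop 0
  have h2 : ∀ᶠ (x : ℝ) in Filter.atTop, 0 < x := Filter.eventually_gt_atTop 0
  obtain ⟨x, hx1, hx2⟩ := (h1.and h2).exists
  refine ⟨x, 0, ne_of_gt hx2, ?_⟩
  have hgx : g.eval x = x * (f.eval x - f.eval 0) - μ * x ^ 2 := by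
    simp [hg, hp, hr]; ring
  rw [hgx] at hx1
  simpa using by linarith
end

section
/- Let n ≥ 1, let A be a real n × n symmetric matrix such that A_{ij} ≤ 0 for all i ≠ j and such that A is diagonally dominant, i.e., A_{kk} ≥ Σ_{i ≠ k} |A_{ik}| for every k. Let q ≥ 1 be an odd integer. Then for every vector u ∈ ℝⁿ one has Σ_{i=1}^{n} Σ_{j=1}^{n} u_i^q · u_j · A_{ij} ≥ 0. -/
/-!
For symmetric `A`, summation by parts gives
`∑ᵢⱼ vᵢ uⱼ Aᵢⱼ = ∑ᵢ vᵢ uᵢ (∑ⱼ Aᵢⱼ) + ½ ∑ᵢⱼ (-Aᵢⱼ) (vᵢ - vⱼ) (uᵢ - uⱼ)`.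
Diagonal dominance makes the row sums nonnegative, and with `vᵢ = uᵢ ^ q` for odd `q`
the factors `vᵢ uᵢ = uᵢ ^ (q + 1)` and `(vᵢ - vⱼ)(uᵢ - uⱼ)` are nonnegative because
`x ↦ x ^ q` is monotone; the off-diagonal entries are nonpositive, so both sums are
nonnegative.
-/

open Finset

theorem Matrix.IsSymm.sum_mul_sub_mul_sub {ι R : Type*} [Fintype ι] [CommRing R]
    {A : Matrix ι ι R} (hA : A.IsSymm) (v u : ι → R) :
    ∑ i, ∑ j, A i j * (v i - v j) * (u i - u j) =
      2 * (∑ i, v i * u i * ∑ j, A i j - ∑ i, ∑ j, v i * u j * A i j) := by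
  have hsplit : ∀ i j, A i j * (v i - v j) * (u i - u j) =
      A i j * (v i * u i - v i * u j) + A j i * (v j * u j - v j * u i) := by
    intro i j
    rw [hA.apply]
    ring
  simp only [hsplit, sum_add_distrib]
  rw [sum_comm (f := fun i j => A j i * (v j * u j - v j * u i)), mul_sub]
  simp only [mul_sum, ← sum_sub_distrib, ← sum_add_distrib]
  exact sum_congr rfl fun i _ => sum_congr rfl fun j _ => by ring

theorem Finset.sum_nonneg_of_sum_erase_abs_le {ι α : Type*} [Fintype ι] [DecidableEq ι]
    [AddCommGroup α] [LinearOrder α] [IsOrderedAddMonoid α] {f : ι → α} {k : ι}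
    (h : ∑ i ∈ univ.erase k, |f i| ≤ f k) : 0 ≤ ∑ i, f i := by
  rw [← add_sum_erase _ _ (mem_univ k)]
  have : -∑ i ∈ univ.erase k, |f i| ≤ ∑ i ∈ univ.erase k, f i := by
    rw [← sum_neg_distrib]
    exact sum_le_sum fun i _ => neg_abs_le (f i)
  simpa using add_le_add h this

theorem Matrix.IsSymm.sum_mul_mul_nonneg {ι R : Type*} [Fintype ι] [CommRing R] [LinearOrder R]
    [IsStrictOrderedRing R] {A : Matrix ι ι R} (hA : A.IsSymm)
    (hoff : ∀ i j, i ≠ j → A i j ≤ 0) (hrow : ∀ i, 0 ≤ ∑ j, A i j)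
    {v u : ι → R} (hvu : Monovary v u) (hdiag : ∀ i, 0 ≤ v i * u i) :
    0 ≤ ∑ i, ∑ j, v i * u j * A i j := by
  have hlap : ∑ i, ∑ j, A i j * (v i - v j) * (u i - u j) ≤ 0 := by
    refine sum_nonpos fun i _ => sum_nonpos fun j _ => ?_
    rcases eq_or_ne i j with rfl | hij
    · simp
    · rw [mul_assoc]
      exact mul_nonpos_of_nonpos_of_nonneg (hoff i j hij) (hvu.sub_mul_sub_nonneg j i)
  have hdiag_sum : 0 ≤ ∑ i, v i * u i * ∑ j, A i j :=
    sum_nonneg fun i _ => mul_nonneg (hdiag i) (hrow i)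
  linarith [hA.sum_mul_sub_mul_sub v u]

theorem quadratic_form_nonneg_of_diag_dominant_general (n : ℕ)
    (A : Matrix (Fin n) (Fin n) ℝ)
    (hsym : A.IsSymm)
    (hoff : ∀ i j : Fin n, i ≠ j → A i j ≤ 0)
    (hdom : ∀ k : Fin n, ∑ i ∈ Finset.univ.erase k, |A i k| ≤ A k k)
    (q : ℕ) (hodd : Odd q) (u : Fin n → ℝ) :
    0 ≤ ∑ i, ∑ j, u i ^ q * u j * A i j := by
  have hrow : ∀ i, 0 ≤ ∑ j, A i j := fun i => by
    simpa only [hsym.apply] using sum_nonneg_of_sum_erase_abs_le (hdom i)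
  have hmono : Monovary (fun i => u i ^ q) u :=
    (monovary_self u).comp_monotone_left hodd.strictMono_pow.monotone
  have hdiag : ∀ i, 0 ≤ u i ^ q * u i := fun i => by
    rw [← pow_succ]
    exact hodd.add_one.pow_nonneg (u i)
  exact hsym.sum_mul_mul_nonneg hoff hrow hmono hdiag

/-- If `A` is a real symmetric `n × n` matrix with nonpositive
off-diagonal entries which is diagonally dominant, and `q ≥ 1` is odd, then
`∑ i ∑ j u_i^q · u_j · A_{ij} ≥ 0` for every vector `u`. -/
theorem quadratic_form_nonneg_of_diag_dominant (n : ℕ) (hn : 1 ≤ n)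
    (A : Matrix (Fin n) (Fin n) ℝ)
    (hsym : A.IsSymm)
    (hoff : ∀ i j : Fin n, i ≠ j → A i j ≤ 0)
    (hdom : ∀ k : Fin n, ∑ i ∈ Finset.univ.erase k, |A i k| ≤ A k k)
    (q : ℕ) (hq : 1 ≤ q) (hodd : Odd q) (u : Fin n → ℝ) :
    0 ≤ ∑ i, ∑ j, u i ^ q * u j * A i j :=
  quadratic_form_nonneg_of_diag_dominant_general n A hsym hoff hdom q hodd u
end
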